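/- arXiv:1801.05612 — 6 statements merged into one kernel-verified Lean document; each statement's English description precedes it below -/
import Mathlib

section
/- On the circle 𝕋 = ℝ/ℤ, both u₁ and u₂ ≡ 0 are forward weak KAM solutions of u + (1/2)|u'|² = 0, where u₁ is the even 1-periodic extension of u(x) = -x²/2 from [0,1/2]; in particular the set of forward weak KAM solutions is not a singleton. -/
open Set

/-- A forward weak KAM solution of `u + |u'|²/2 = 0` on the circle `𝕋 = ℝ/ℤ`,
modelled by 1-periodic functions on `ℝ`.  The Lagrangian is
`L(x,u,v) = v²/2 - u`. -/
def IsForwardWeakKAMCircle (u : ℝ → ℝ) : Prop :=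
  Continuous u ∧ (∀ x : ℝ, u (x + 1) = u x) ∧
  -- (i) domination along C¹ curves
  (∀ (γ : ℝ → ℝ) (t₁ t₂ : ℝ), t₁ < t₂ → ContDiffOn ℝ 1 γ (Icc t₁ t₂) →
    u (γ t₂) - u (γ t₁) ≤ ∫ s in t₁..t₂, ((deriv γ s) ^ 2 / 2 - u (γ s))) ∧
  -- (ii) forward calibrated curves from every point
  (∀ x : ℝ, ∃ γ : ℝ → ℝ, γ 0 = x ∧ ContDiff ℝ 1 γ ∧
    ∀ t > (0:ℝ), u (γ t) - u (γ 0) = ∫ s in (0:ℝ)..t, ((deriv γ s) ^ 2 / 2 - u (γ s)))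

/-!
Writing `‖x‖` for the distance from `x` to `ℤ` (the norm on `UnitAddCircle`), `u₁ x = -‖x‖² / 2`
is the upper envelope of the parabolas `-(x - k)² / 2`, `k ∈ ℤ`. Comparing with the parabola of
the integer nearest to `γ z` shows that the upper right Dini derivative of `u₁ ∘ γ` is at most
`‖γ‖ |γ'| ≤ γ'² / 2 - u₁ ∘ γ`, and a comparison principle for right Dini derivatives integrates
this to the domination inequality. From `x = k + r` with `|r| ≤ 1/2`, the curve `k + r e^{-t}`
slides down the parabola of `k` and is calibrated. For `u₂ ≡ 0` everything is immediate.
-/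

open Filter Topology

noncomputable def negHalfNormSq (x : ℝ) : ℝ := -‖(x : UnitAddCircle)‖ ^ 2 / 2

@[simp]
theorem UnitAddCircle.coe_intCast (k : ℤ) : ((k : ℝ) : UnitAddCircle) = 0 :=
  (AddCircle.coe_eq_zero_iff 1).2 ⟨k, by simp⟩

theorem UnitAddCircle.norm_coe_le_abs (x : ℝ) : ‖(x : UnitAddCircle)‖ ≤ |x| :=
  QuotientAddGroup.norm_mk_le_norm

theorem UnitAddCircle.norm_coe_le_abs_sub_intCast (x : ℝ) (k : ℤ) :
    ‖(x : UnitAddCircle)‖ ≤ |x - k| := by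
  simpa using norm_coe_le_abs (x - k)

theorem UnitAddCircle.norm_coe_le_norm_coe_add_abs_sub (y y₀ : ℝ) :
    ‖(y : UnitAddCircle)‖ ≤ ‖(y₀ : UnitAddCircle)‖ + |y - y₀| := by
  have := norm_coe_le_abs (y - y₀)
  rw [AddCircle.coe_sub] at this
  linarith [norm_le_norm_add_norm_sub' (y : UnitAddCircle) y₀]

theorem continuous_negHalfNormSq : Continuous negHalfNormSq := by
  unfold negHalfNormSq; fun_prop

theorem negHalfNormSq_add_one (x : ℝ) : negHalfNormSq (x + 1) = negHalfNormSq x := by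
  simp [negHalfNormSq]

theorem negHalfNormSq_intCast_add {y : ℝ} (hy : |y| ≤ 1 / 2) (k : ℤ) :
    negHalfNormSq (k + y) = -y ^ 2 / 2 := by
  have : ‖(y : UnitAddCircle)‖ = |y| :=
    (AddCircle.norm_coe_eq_abs_iff (p := 1) one_ne_zero).2 (by simpa using hy)
  simp [negHalfNormSq, this]

theorem negHalfNormSq_sub_le (y y₀ : ℝ) :
    negHalfNormSq y - negHalfNormSq y₀ ≤
      ‖(y₀ : UnitAddCircle)‖ * |y - y₀| + 3 / 2 * (y - y₀) ^ 2 := by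
  -- the parabola of the integer nearest to `y` touches the envelope at `y`, lies below it at `y₀`
  have hy : ‖(y : UnitAddCircle)‖ ^ 2 = (y - round y) ^ 2 := by
    rw [UnitAddCircle.norm_eq, sq_abs]
  have hy₀ : ‖(y₀ : UnitAddCircle)‖ ^ 2 ≤ (y₀ - round y) ^ 2 := by
    rw [← sq_abs (y₀ - _)]
    exact pow_le_pow_left₀ (norm_nonneg _) (UnitAddCircle.norm_coe_le_abs_sub_intCast _ _) 2
  have hcross : (y - round y) * (y₀ - y) ≤ ‖(y : UnitAddCircle)‖ * |y - y₀| := by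
    rw [UnitAddCircle.norm_eq, abs_sub_comm y y₀, ← abs_mul]; exact le_abs_self _
  have htri := mul_le_mul_of_nonneg_right
    (UnitAddCircle.norm_coe_le_norm_coe_add_abs_sub y y₀) (abs_nonneg (y - y₀))
  unfold negHalfNormSq
  nlinarith [sq_abs (y - y₀)]

theorem sub_le_intervalIntegral_of_frequently_slope_lt {φ g : ℝ → ℝ} {a b : ℝ} (hab : a ≤ b)
    (hφ : ContinuousOn φ (Icc a b)) (hg : ContinuousOn g (Icc a b))
    (hslope : ∀ x ∈ Ico a b, ∀ r, g x < r → ∃ᶠ z in 𝓝[>] x, slope φ x z < r) :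
    φ b - φ a ≤ ∫ t in a..b, g t := by
  have hprim : ContinuousOn (fun x => ∫ t in a..x, g t) (Icc a b) := by
    simpa [uIcc_of_le hab] using intervalIntegral.continuousOn_primitive_interval'
      (hg.intervalIntegrable_of_Icc hab) left_mem_uIcc
  have hderiv : ∀ x ∈ Ico a b,
      HasDerivWithinAt (fun x => φ a + ∫ t in a..x, g t) (g x) (Ici x) x := by
    intro x hx
    have hIcc : Icc a b ∈ 𝓝[>] x := Icc_mem_nhdsGT_of_mem hx
    refine (intervalIntegral.integral_hasDerivWithinAt_right
      ((hg.mono (Icc_subset_Icc_right hx.2.le)).intervalIntegrable_of_Icc hx.1)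
      ((hg.stronglyMeasurableAtFilter_nhdsWithin measurableSet_Icc x).filter_mono
        (nhdsWithin_le_of_mem hIcc))
      ((hg x (Ico_subset_Icc_self hx)).mono_of_mem_nhdsWithin hIcc)).const_add _
  have := image_le_of_liminf_slope_right_le_deriv_boundary hφ
    (B := fun x => φ a + ∫ t in a..x, g t) (by simp) (continuousOn_const.add hprim) hderiv hslope
    (right_mem_Icc.2 hab)
  linarith

theorem frequently_slope_negHalfNormSq_comp_lt {γ : ℝ → ℝ} {v x r : ℝ}
    (hγ : HasDerivWithinAt γ v (Ioi x) x) (hr : v ^ 2 / 2 - negHalfNormSq (γ x) < r) :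
    ∃ᶠ z in 𝓝[>] x, slope (negHalfNormSq ∘ γ) x z < r := by
  set N := ‖(γ x : UnitAddCircle)‖
  have hslope : Tendsto (slope γ x) (𝓝[>] x) (𝓝 v) :=
    (hasDerivWithinAt_iff_tendsto_slope' (lt_irrefl x)).1 hγ
  have hincr : Tendsto (fun z => γ z - γ x) (𝓝[>] x) (𝓝 0) := by
    simpa using hγ.continuousWithinAt.tendsto.sub_const (γ x)
  have hbound : Tendsto (fun z => N * |slope γ x z| + 3 / 2 * (slope γ x z * (γ z - γ x)))
      (𝓝[>] x) (𝓝 (N * |v|)) := by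
    simpa using ((hslope.abs.const_mul N).add ((hslope.mul hincr).const_mul (3 / 2)))
  have hNv : N * |v| < r := by
    unfold negHalfNormSq at hr
    nlinarith [sq_nonneg (N - |v|), sq_abs v]
  have hle : ∀ᶠ z in 𝓝[>] x, slope (negHalfNormSq ∘ γ) x z ≤
      N * |slope γ x z| + 3 / 2 * (slope γ x z * (γ z - γ x)) := by
    filter_upwards [self_mem_nhdsWithin] with z (hz : x < z)
    have hzx : 0 < z - x := sub_pos.2 hz
    rw [slope_def_field, slope_def_field, abs_div, abs_of_pos hzx, div_le_iff₀ hzx]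
    have := negHalfNormSq_sub_le (γ z) (γ x)
    field_simp
    simp only [Function.comp_apply]
    nlinarith
  exact ((hle.and (hbound.eventually (gt_mem_nhds hNv))).mono
    fun z hz => hz.1.trans_lt hz.2).frequently

theorem negHalfNormSq_comp_sub_le_integral {γ : ℝ → ℝ} {t₁ t₂ : ℝ} (h12 : t₁ < t₂)
    (hγ : ContDiffOn ℝ 1 γ (Icc t₁ t₂)) :
    negHalfNormSq (γ t₂) - negHalfNormSq (γ t₁) ≤
      ∫ s in t₁..t₂, ((deriv γ s) ^ 2 / 2 - negHalfNormSq (γ s)) := by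
  set γ' := derivWithin γ (Icc t₁ t₂)
  have hγ' : ContinuousOn γ' (Icc t₁ t₂) :=
    hγ.continuousOn_derivWithin (uniqueDiffOn_Icc h12) le_rfl
  have hderiv : ∀ s ∈ Icc t₁ t₂, HasDerivWithinAt γ (γ' s) (Icc t₁ t₂) s :=
    fun s hs => (hγ.differentiableOn one_ne_zero s hs).hasDerivWithinAt
  have hcongr : ∫ s in t₁..t₂, ((deriv γ s) ^ 2 / 2 - negHalfNormSq (γ s)) =
      ∫ s in t₁..t₂, ((γ' s) ^ 2 / 2 - negHalfNormSq (γ s)) := by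
    simp only [intervalIntegral.integral_of_le h12.le, MeasureTheory.integral_Ioc_eq_integral_Ioo]
    refine MeasureTheory.setIntegral_congr_fun measurableSet_Ioo fun s hs => ?_
    rw [((hderiv s (Ioo_subset_Icc_self hs)).hasDerivAt (Icc_mem_nhds hs.1 hs.2)).deriv]
  rw [hcongr]
  refine sub_le_intervalIntegral_of_frequently_slope_lt (φ := negHalfNormSq ∘ γ) h12.le
    (continuous_negHalfNormSq.comp_continuousOn hγ.continuousOn)
    (((hγ'.pow 2).div_const 2).sub (continuous_negHalfNormSq.comp_continuousOn hγ.continuousOn))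
    fun x hx r hr => frequently_slope_negHalfNormSq_comp_lt
      ((hderiv x (Ico_subset_Icc_self hx)).mono_of_mem_nhdsWithin (Icc_mem_nhdsGT_of_mem hx)) hr

theorem exists_calibrated_curve_negHalfNormSq (x : ℝ) :
    ∃ γ : ℝ → ℝ, γ 0 = x ∧ ContDiff ℝ 1 γ ∧ ∀ t > (0 : ℝ),
      negHalfNormSq (γ t) - negHalfNormSq (γ 0) =
        ∫ s in (0 : ℝ)..t, ((deriv γ s) ^ 2 / 2 - negHalfNormSq (γ s)) := by
  set r := x - round x
  set e : ℝ → ℝ := fun s => r * Real.exp (-s)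
  have he : ∀ s, HasDerivAt e (-e s) s := fun s => by
    simpa [e] using ((hasDerivAt_neg s).exp.const_mul r)
  have hγ : ∀ s, HasDerivAt (fun s => round x + e s) (-e s) s :=
    fun s => (he s).const_add _
  have hval : ∀ s, 0 ≤ s → negHalfNormSq (round x + e s) = -e s ^ 2 / 2 := fun s hs => by
    refine negHalfNormSq_intCast_add ?_ _
    calc |e s| = |r| * Real.exp (-s) := by simp [e, abs_mul]
      _ ≤ 1 / 2 * 1 := mul_le_mul (abs_sub_round x) (Real.exp_le_one_iff.2 (by linarith))
          (Real.exp_pos _).le (by norm_num)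
      _ = 1 / 2 := mul_one _
  have hF : ∀ s, HasDerivAt (fun s => -e s ^ 2 / 2) (e s ^ 2) s := fun s =>
    ((he s).pow 2).neg.div_const 2 |>.congr_deriv (by ring)
  refine ⟨fun s => round x + e s, by simp [e, r], ?_, fun t ht => ?_⟩
  · fun_prop
  · rw [hval t ht.le, hval 0 le_rfl, intervalIntegral.integral_congr (g := fun s => e s ^ 2),
      intervalIntegral.integral_eq_sub_of_hasDerivAt (fun s _ => hF s)
        ((Continuous.pow (by fun_prop : Continuous e) 2).intervalIntegrable _ _)]
    intro s hs
    rw [uIcc_of_le ht.le] at hs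
    simp only [(hγ s).deriv, hval s hs.1]
    ring

theorem isForwardWeakKAMCircle_negHalfNormSq : IsForwardWeakKAMCircle negHalfNormSq :=
  ⟨continuous_negHalfNormSq, negHalfNormSq_add_one,
    fun _ _ _ => negHalfNormSq_comp_sub_le_integral, exists_calibrated_curve_negHalfNormSq⟩

theorem isForwardWeakKAMCircle_zero : IsForwardWeakKAMCircle fun _ => 0 := by
  refine ⟨continuous_const, fun _ => rfl, fun γ t₁ t₂ h12 _ => ?_,
    fun x => ⟨fun _ => x, rfl, contDiff_const, fun t _ => by simp⟩⟩
  simpa using intervalIntegral.integral_nonneg h12.le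
    fun s _ => (by positivity : 0 ≤ deriv γ s ^ 2 / 2)

theorem eq_negHalfNormSq_of_periodic_of_even {u : ℝ → ℝ}
    (hval : ∀ x ∈ Icc (0 : ℝ) (1 / 2), u x = -x ^ 2 / 2)
    (hper : ∀ x, u (x + 1) = u x) (heven : ∀ x, u (-x) = u x) : u = negHalfNormSq := by
  funext x
  have hu_abs : ∀ y, u |y| = u y := fun y => by
    rcases abs_choice y with h | h <;> rw [h]; exact heven y
  calc u x = u (x - round x) := by
        simpa using (Function.Periodic.sub_int_mul_eq hper (round x)).symm
    _ = -|x - round x| ^ 2 / 2 := by rw [← hu_abs, hval _ ⟨abs_nonneg _, abs_sub_round x⟩]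
    _ = negHalfNormSq x := by rw [negHalfNormSq, UnitAddCircle.norm_eq]

/-- on the circle, both `u₁` (the even 1-periodic extension of
`-x²/2` from `[0,1/2]`) and `u₂ ≡ 0` are forward weak KAM solutions of
`u + |u'|²/2 = 0`; in particular the set of forward weak KAM solutions is not
a singleton. -/
theorem stmt_8
    (u₁ : ℝ → ℝ)
    (hval : ∀ x ∈ Icc (0:ℝ) (1/2), u₁ x = -x ^ 2 / 2)
    (hper : ∀ x : ℝ, u₁ (x + 1) = u₁ x)
    (heven : ∀ x : ℝ, u₁ (-x) = u₁ x) :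
    IsForwardWeakKAMCircle u₁ ∧ IsForwardWeakKAMCircle (fun _ => 0) ∧
      u₁ ≠ fun _ => 0 := by
  refine ⟨eq_negHalfNormSq_of_periodic_of_even hval hper heven ▸
    isForwardWeakKAMCircle_negHalfNormSq, isForwardWeakKAMCircle_zero, fun h => ?_⟩
  have := hval (1 / 2) ⟨by norm_num, le_rfl⟩
  norm_num [h] at this
end

section
/- If (x(·),u(·)) is a static curve, then u(t) = h_{x(s),u(s)}(x(t), +∞) for all s, t ∈ ℝ. -/
open Set Filter

/-- if `(x(·),u(·))` is a static curve, then
`u(t) = h_{x(s),u(s)}(x(t), +∞)` for all `s, t ∈ ℝ`, i.e. the forward implicit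
action function from any point of the curve converges to the value of `u`. -/
theorem stmt_11
    {E : Type*} [NormedAddCommGroup E]
    (hf : E → ℝ → E → ℝ → ℝ)
    -- Markov property (inequality form) of the forward implicit action function
    (hMarkov : ∀ (x₀ : E) (u₀ : ℝ) (x y : E) (t s : ℝ), 0 < t → 0 < s →
      hf x₀ u₀ x (t + s) ≤ hf y (hf x₀ u₀ y t) x s)
    -- monotonicity in the initial value
    (hmono : ∀ (x₀ x : E) (t : ℝ), 0 < t → Monotone fun u₀ => hf x₀ u₀ x t)
    -- `h_{x₀,u₀}(x, +∞)` exists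
    (hlim : ∀ (x₀ : E) (u₀ : ℝ) (x : E),
      ∃ l : ℝ, Tendsto (fun T => hf x₀ u₀ x T) atTop (nhds l))
    (xc : ℝ → E) (uc : ℝ → ℝ)
    -- globally minimizing
    (hglob : ∀ t₁ t₂ : ℝ, t₁ < t₂ →
      uc t₂ = hf (xc t₁) (uc t₁) (xc t₂) (t₂ - t₁))
    -- static: `u(t₂) = inf_{s>0} h_{x(t₁),u(t₁)}(x(t₂), s)`
    (hstatic : ∀ t₁ t₂ : ℝ,
      IsGLB ((fun s => hf (xc t₁) (uc t₁) (xc t₂) s) '' Ioi 0) (uc t₂)) :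
    ∀ s t : ℝ,
      Tendsto (fun T => hf (xc s) (uc s) (xc t) T) atTop (nhds (uc t)) := by
  intro s t
  obtain ⟨l, hl⟩ := hlim (xc s) (uc s) (xc t)
  suffices h : l = uc t by rwa [h] at hl
  have hlb : ∀ T : ℝ, 0 < T → uc t ≤ hf (xc s) (uc s) (xc t) T := fun T hT =>
    (hstatic s t).1 ⟨T, hT, rfl⟩
  have h1 : uc t ≤ l := by
    refine ge_of_tendsto hl ?_
    filter_upwards [eventually_gt_atTop (0 : ℝ)] with T hT using hlb T hT
  have h2 : ∀ ε > (0 : ℝ), l ≤ uc t + ε := by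
    intro ε hε
    have hfreq : ∃ᶠ T in atTop, hf (xc s) (uc s) (xc t) T ≤ uc t + ε := by
      rw [frequently_atTop]
      intro a
      set t₂ := s + max a 1 with ht₂def
      have hmax : (1 : ℝ) ≤ max a 1 := le_max_right a 1
      have ht₂ : s < t₂ := by simp only [ht₂def]; linarith
      obtain ⟨r, hr, hrval⟩ : ∃ r > (0 : ℝ), hf (xc t₂) (uc t₂) (xc t) r < uc t + ε := by
        by_contra hcon
        push_neg at hcon
        have : uc t + ε ≤ uc t := by
          refine (hstatic t₂ t).2 ?_
          rintro y ⟨r, hr, rfl⟩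
          exact hcon r hr
        linarith
      refine ⟨(t₂ - s) + r, ?_, ?_⟩
      · have := le_max_left a 1
        simp only [ht₂def]
        linarith
      · calc hf (xc s) (uc s) (xc t) ((t₂ - s) + r)
            ≤ hf (xc t₂) (hf (xc s) (uc s) (xc t₂) (t₂ - s)) (xc t) r :=
              hMarkov _ _ _ _ _ _ (by linarith) hr
          _ = hf (xc t₂) (uc t₂) (xc t) r := by rw [← hglob s t₂ ht₂]
          _ ≤ uc t + ε := hrval.le
    haveI hne : (atTop ⊓ 𝓟 {T | hf (xc s) (uc s) (xc t) T ≤ uc t + ε}).NeBot :=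
      frequently_iff_neBot.mp hfreq
    exact le_of_tendsto (x := atTop ⊓ 𝓟 {T | hf (xc s) (uc s) (xc t) T ≤ uc t + ε})
      (hl.mono_left inf_le_left)
      (eventually_inf_principal.mpr (Eventually.of_forall fun T hT => hT))
  have := le_of_forall_pos_le_add h2
  linarith
end

section
/- If (x(·),u(·)): ℝ → M × ℝ is a static curve, then u(t) = u₋(x(t)) for all t ∈ ℝ, where u₋ is the unique backward weak KAM solution. -/
open Set Filter

/-- if `(x(·),u(·))` is a static curve, then `u(t) = u₋(x(t))` for all
`t ∈ ℝ`, where `u₋` is the unique backward weak KAM solution (characterized by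
`h_{x₀,u₀}(x,+∞) = u₋(x)` and the fixed-point property for `T⁻`). -/
theorem stmt_12
    {E : Type*} [NormedAddCommGroup E]
    (hf : E → ℝ → E → ℝ → ℝ)
    (hMarkov : ∀ (x₀ : E) (u₀ : ℝ) (x y : E) (t s : ℝ), 0 < t → 0 < s →
      hf x₀ u₀ x (t + s) ≤ hf y (hf x₀ u₀ y t) x s)
    (hmono : ∀ (x₀ x : E) (t : ℝ), 0 < t → Monotone fun u₀ => hf x₀ u₀ x t)
    (um : E → ℝ)
    -- convergence of the implicit action function: `h_{x₀,u₀}(x,+∞) = u₋(x)`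
    (hconv : ∀ (x₀ : E) (u₀ : ℝ) (x : E),
      Tendsto (fun T => hf x₀ u₀ x T) atTop (nhds (um x)))
    -- `u₋` is a fixed point of `T⁻ₛ`: `u₋(x) = inf_y h_{y,u₋(y)}(x,s)`
    (hfix : ∀ s > (0:ℝ), ∀ x : E,
      IsGLB (Set.range fun y => hf y (um y) x s) (um x))
    (xc : ℝ → E) (uc : ℝ → ℝ)
    -- static curve: globally minimizing …
    (hglob : ∀ t₁ t₂ : ℝ, t₁ < t₂ →
      uc t₂ = hf (xc t₁) (uc t₁) (xc t₂) (t₂ - t₁))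
    -- … and `u(t₂) = inf_{s>0} h_{x(t₁),u(t₁)}(x(t₂), s)`
    (hstatic : ∀ t₁ t₂ : ℝ,
      IsGLB ((fun s => hf (xc t₁) (uc t₁) (xc t₂) s) '' Ioi 0) (uc t₂)) :
    ∀ t : ℝ, uc t = um (xc t) := by
  intro t
  -- lower bound property at the point itself
  have hlow : ∀ T > (0:ℝ), uc t ≤ hf (xc t) (uc t) (xc t) T := by
    intro T hT
    exact (hstatic t t).1 ⟨T, hT, rfl⟩
  -- direction 1 : uc t ≤ um (xc t)
  have h1 : uc t ≤ um (xc t) := by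
    refine ge_of_tendsto (hconv (xc t) (uc t) (xc t)) ?_
    filter_upwards [eventually_gt_atTop (0:ℝ)] with T hT using hlow T hT
  -- direction 2 : um (xc t) ≤ uc t
  have h2 : um (xc t) ≤ uc t := by
    by_contra hcon
    push_neg at hcon
    set ε : ℝ := um (xc t) - uc t with hε
    have hεpos : 0 < ε := by simpa [hε] using sub_pos.mpr hcon
    -- eventually the action is above uc t + ε/2
    have hev : ∀ᶠ T in atTop, uc t + ε / 2 < hf (xc t) (uc t) (xc t) T := by
      have hlt : uc t + ε / 2 < um (xc t) := by simp [hε]; linarith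
      exact (hconv (xc t) (uc t) (xc t)).eventually (eventually_gt_nhds hlt)
    obtain ⟨R, hR⟩ := eventually_atTop.mp hev
    set r : ℝ := max R 1 with hrdef
    have hrpos : 0 < r := lt_of_lt_of_le one_pos (le_max_right _ _)
    -- since uc t is the *greatest* lower bound at time parameter (t+r, t),
    -- there is some s > 0 with action value < uc t + ε/2
    have hexists : ∃ s > (0:ℝ), hf (xc (t + r)) (uc (t + r)) (xc t) s < uc t + ε / 2 := by
      by_contra h
      push_neg at h
      have hlb : uc t + ε / 2 ∈ lowerBounds
          ((fun s => hf (xc (t + r)) (uc (t + r)) (xc t) s) '' Ioi 0) := by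
        rintro v ⟨s, hs, rfl⟩
        exact h s hs
      have := (hstatic (t + r) t).2 hlb
      linarith
    obtain ⟨s, hs, hsmall⟩ := hexists
    -- Markov property connecting through the curve point at time t + r
    have hM := hMarkov (xc t) (uc t) (xc t) (xc (t + r)) r s hrpos hs
    have hg := hglob t (t + r) (by linarith)
    rw [show t + r - t = r by ring] at hg
    rw [← hg] at hM
    -- r + s is beyond R, so the action value there is large; contradiction
    have hbig : uc t + ε / 2 < hf (xc t) (uc t) (xc t) (r + s) := by
      refine hR (r + s) ?_
      have : R ≤ r := le_max_left _ _
      linarith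
    linarith
  linarith
end

section
/- Gronwall comparison for calibrated curves: let γ₊: [0,∞) → M be a (u₊,L,0)-calibrated curve and suppose u₋(γ₊(0)) = u₊(γ₊(0)). If u₋ ≥ u₊ on M and -λ ≤ ∂L/∂u < 0, then u₋(γ₊(s)) = u₊(γ₊(s)) for all s ≥ 0. -/
open Set

/-- Gronwall comparison for calibrated curves: if `γ₊` is a
`(u₊,L,0)`-calibrated curve on `[0,∞)` with `u₋(γ₊(0)) = u₊(γ₊(0))`, `u₋ ≥ u₊`,
`u₋ ≺ L` and `-λ ≤ ∂L/∂u < 0`, then `u₋(γ₊(s)) = u₊(γ₊(s))` for all `s ≥ 0`. -/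
theorem stmt_13
    {E : Type*} [NormedAddCommGroup E] [InnerProductSpace ℝ E]
    (L : E → ℝ → E → ℝ) (lam : ℝ) (hlam : 0 < lam)
    (hLc : Continuous fun q : E × ℝ × E => L q.1 q.2.1 q.2.2)
    -- (L3): -λ ≤ ∂L/∂u < 0
    (hL3 : ∀ x v, ∀ r₁ r₂ : ℝ, r₁ < r₂ →
      L x r₂ v < L x r₁ v ∧ L x r₁ v - L x r₂ v ≤ lam * (r₂ - r₁))
    (um up : E → ℝ) (humc : Continuous um) (hupc : Continuous up)
    -- `u₋ ≺ L`
    (hdom : ∀ (γ : ℝ → E) (t₁ t₂ : ℝ), t₁ < t₂ →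
      ContDiffOn ℝ 1 γ (Icc t₁ t₂) →
      um (γ t₂) - um (γ t₁) ≤ ∫ s in t₁..t₂, L (γ s) (um (γ s)) (deriv γ s))
    -- `u₊ ≤ u₋` on `M`
    (hle : ∀ x : E, up x ≤ um x)
    (γ : ℝ → E) (hγ : ContDiff ℝ 1 γ)
    -- `γ` is `(u₊,L,0)`-calibrated on `[0,∞)`
    (hcal : ∀ t t' : ℝ, 0 ≤ t → t ≤ t' →
      up (γ t') - up (γ t) = ∫ s in t..t', L (γ s) (up (γ s)) (deriv γ s))
    (heq : um (γ 0) = up (γ 0)) :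
    ∀ s : ℝ, 0 ≤ s → um (γ s) = up (γ s) := by
  intro s hs
  rcases eq_or_lt_of_le hs with h0 | h0
  · rw [← h0]; exact heq
  -- continuity of the integrands
  have hγc : Continuous γ := hγ.continuous
  have hdγ : Continuous (deriv γ) := hγ.continuous_deriv le_rfl
  have hcm : Continuous fun t => L (γ t) (um (γ t)) (deriv γ t) :=
    hLc.comp (hγc.prodMk ((humc.comp hγc).prodMk hdγ))
  have hcp : Continuous fun t => L (γ t) (up (γ t)) (deriv γ t) :=
    hLc.comp (hγc.prodMk ((hupc.comp hγc).prodMk hdγ))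
  -- the upper bound from domination and calibration
  have h1 := hdom γ 0 s h0 hγ.contDiffOn
  have h2 := hcal 0 s le_rfl hs
  have hmono : (∫ t in (0:ℝ)..s, L (γ t) (um (γ t)) (deriv γ t))
      ≤ ∫ t in (0:ℝ)..s, L (γ t) (up (γ t)) (deriv γ t) := by
    apply intervalIntegral.integral_mono_on hs (hcm.intervalIntegrable 0 s)
      (hcp.intervalIntegrable 0 s)
    intro t _
    rcases eq_or_lt_of_le (hle (γ t)) with h | h
    · simp [← h]
    · exact ((hL3 (γ t) (deriv γ t) (up (γ t)) (um (γ t)) h).1).le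
  have key : um (γ s) - up (γ s) ≤ 0 := by
    have : um (γ s) - up (γ s) = (um (γ s) - um (γ 0)) - (up (γ s) - up (γ 0)) := by
      rw [heq]; ring
    rw [this, h2]
    linarith
  have := hle (γ s)
  linarith
end

section
/- C^{1,1} regularity on the set of agreement: both u₋ and u₊ are of class C^{1,1} on the set I_{u₊} := {x ∈ M : u₋(x) = u₊(x)}; in particular the common value u := u₋ = u₊ has Lipschitz derivative there. -/
/-!
Adding `C/2 ‖·‖²` turns a semiconvex function into a midpoint convex, hence (being continuous)
convex function, and Hahn–Banach gives it a supporting hyperplane at every point: `u₊` has a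
lower supporting paraboloid of slope `q` at `x`, and dually `u₋` an upper one of slope `p`.
At a point of the agreement set, `u₊ ≤ u₋` squeezes the two: `⟪q - p, h⟫ ≤ C ‖h‖²` for all `h`,
so `p = q`, and both functions lie between two paraboloids touching at `x` with the same slope,
which is then their gradient. Chaining the supports at two agreement points `x, y` and testing
with a vector of length `‖y - x‖` in the direction of `∇u(y) - ∇u(x)` gives the Lipschitz
bound `‖∇u(y) - ∇u(x)‖ ≤ 3 C ‖y - x‖`.
-/

open Set Filter
open scoped NNReal

local notation "⟪" x ", " y "⟫" => (inner ℝ x y : ℝ)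

section Semiconvex

variable {E : Type*} [NormedAddCommGroup E]

def SemiconvexWith (C : ℝ) (f : E → ℝ) : Prop :=
  ∀ x h : E, -(C * ‖h‖ ^ 2) ≤ f (x + h) + f (x - h) - 2 * f x

def SemiconcaveWith (C : ℝ) (f : E → ℝ) : Prop :=
  ∀ x h : E, f (x + h) + f (x - h) - 2 * f x ≤ C * ‖h‖ ^ 2

lemma SemiconcaveWith.neg {C : ℝ} {f : E → ℝ} (hf : SemiconcaveWith C f) :
    SemiconvexWith C (-f) := fun x h => by
  simp only [Pi.neg_apply]
  linarith [hf x h]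

end Semiconvex

lemma nonpos_of_midpoint_le {g : ℝ → ℝ} (hg : ContinuousOn g (Icc 0 1))
    (h₀ : g 0 ≤ 0) (h₁ : g 1 ≤ 0)
    (hmid : ∀ s ∈ Icc (0 : ℝ) 1, ∀ t ∈ Icc (0 : ℝ) 1, 2 * g ((s + t) / 2) ≤ g s + g t) :
    ∀ t ∈ Icc (0 : ℝ) 1, g t ≤ 0 := by
  obtain ⟨m, hm, hmax⟩ := isCompact_Icc.exists_isMaxOn (nonempty_Icc.2 zero_le_one) hg
  suffices g m ≤ 0 from fun t ht => (hmax ht).trans this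
  by_contra! hpos
  have hK : IsCompact (Icc (0 : ℝ) 1 ∩ g ⁻¹' {g m}) :=
    isCompact_Icc.of_isClosed_subset
      (hg.preimage_isClosed_of_isClosed isClosed_Icc isClosed_singleton) inter_subset_left
  obtain ⟨a, ⟨ha, hga : g a = g m⟩, hleast⟩ := hK.exists_isLeast ⟨m, hm, rfl⟩
  have ha₀ : 0 < a := ha.1.lt_of_ne (by rintro rfl; linarith)
  have ha₁ : a < 1 := ha.2.lt_of_ne (by rintro rfl; linarith)
  set δ := min a (1 - a)
  have hδ : 0 < δ := lt_min ha₀ (by linarith)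
  have hl : a - δ ∈ Icc (0 : ℝ) 1 := ⟨by linarith [min_le_left a (1 - a)], by linarith⟩
  have hr : a + δ ∈ Icc (0 : ℝ) 1 := ⟨by linarith, by linarith [min_le_right a (1 - a)]⟩
  -- `a` is the leftmost maximiser, so `g` is strictly below its maximum at `a - δ`
  have hgl : g (a - δ) < g m :=
    (hmax hl).lt_of_ne fun h => by linarith [hleast ⟨hl, (h : g (a - δ) = g m)⟩]
  have := hmid _ hl _ hr
  rw [show (a - δ + (a + δ)) / 2 = a by ring, hga] at this
  have hgr : g (a + δ) ≤ g m := hmax hr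
  linarith

theorem convexOn_univ_of_midpoint_le {E : Type*} [AddCommGroup E] [Module ℝ E]
    [TopologicalSpace E] [IsTopologicalAddGroup E] [ContinuousSMul ℝ E] {f : E → ℝ}
    (hf : Continuous f) (hmid : ∀ x h : E, 2 * f x ≤ f (x + h) + f (x - h)) :
    ConvexOn ℝ univ f := by
  refine ⟨convex_univ, fun x _ y _ a b _ hb hab => ?_⟩
  set g : ℝ → ℝ := fun t => f (x + t • (y - x)) - (f x + t * (f y - f x))
  have hg : Continuous g := by fun_prop
  have hgmid : ∀ s ∈ Icc (0 : ℝ) 1, ∀ t ∈ Icc (0 : ℝ) 1, 2 * g ((s + t) / 2) ≤ g s + g t := by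
    intro s _ t _
    have h := hmid (x + ((s + t) / 2) • (y - x)) (((t - s) / 2) • (y - x))
    rw [show x + ((s + t) / 2) • (y - x) + ((t - s) / 2) • (y - x) = x + t • (y - x) by module,
      show x + ((s + t) / 2) • (y - x) - ((t - s) / 2) • (y - x) = x + s • (y - x) by module] at h
    simp only [g]
    linear_combination h
  have hb' := nonpos_of_midpoint_le hg.continuousOn (by simp [g]) (by simp [g]) hgmid b
    ⟨hb, by linarith⟩
  obtain rfl : a = 1 - b := by linarith
  simp only [g, show x + b • (y - x) = (1 - b) • x + b • y by module] at hb'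
  rw [smul_eq_mul, smul_eq_mul]
  linarith

theorem ConvexOn.exists_clm_add_le {E : Type*} [AddCommGroup E] [Module ℝ E]
    [TopologicalSpace E] [IsTopologicalAddGroup E] [ContinuousSMul ℝ E] {f : E → ℝ}
    (hf : ConvexOn ℝ univ f) (hc : Continuous f) (x : E) :
    ∃ φ : StrongDual ℝ E, ∀ y, f x + φ (y - x) ≤ f y := by
  have hopen : IsOpen {q : E × ℝ | f q.1 < q.2} :=
    isOpen_lt (hc.comp continuous_fst) continuous_snd
  have hconv : Convex ℝ {q : E × ℝ | f q.1 < q.2} := by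
    simpa using hf.convex_strict_epigraph
  obtain ⟨L, hL⟩ := geometric_hahn_banach_open_point (x := (x, f x)) hconv hopen (by simp)
  set ψ := L.comp (ContinuousLinearMap.inl ℝ E ℝ)
  set c := L (0, 1)
  have hsplit : ∀ y t, L (y, t) = ψ y + t * c := fun y t => by
    rw [show (y, t) = ContinuousLinearMap.inl ℝ E ℝ y + t • ((0 : E), (1 : ℝ)) by
      ext <;> simp, map_add, map_smul, smul_eq_mul]
    rfl
  have hc : 0 < -c := by
    have := hL (x, f x + 1) (by simp)
    rw [hsplit, hsplit] at this
    linarith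
  refine ⟨(-c)⁻¹ • ψ, fun y => ?_⟩
  -- the supporting hyperplane at `(x, f x)` lies below every point `(y, t)` with `t > f y`
  refine le_of_forall_gt_imp_ge_of_dense fun t ht => ?_
  have := hL (y, t) ht
  rw [hsplit, hsplit] at this
  have hφ : ((-c)⁻¹ • ψ) (y - x) ≤ t - f x := by
    rw [smul_apply, smul_eq_mul, map_sub, inv_mul_le_iff₀ hc]
    nlinarith
  linarith

section InnerProduct

variable {E : Type*} [NormedAddCommGroup E] [InnerProductSpace ℝ E]

theorem SemiconvexWith.exists_quadratic_minorant [CompleteSpace E] {C : ℝ} {f : E → ℝ}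
    (hf : SemiconvexWith C f) (hc : Continuous f) (x : E) :
    ∃ p : E, ∀ z, f x + ⟪p, z - x⟫ - C / 2 * ‖z - x‖ ^ 2 ≤ f z := by
  set F : E → ℝ := fun y => f y + C / 2 * ‖y‖ ^ 2
  have hFc : Continuous F := by fun_prop
  have hFmid : ∀ y h : E, 2 * F y ≤ F (y + h) + F (y - h) := fun y h => by
    simp only [F, norm_add_sq_real, norm_sub_sq_real]
    linear_combination hf y h
  obtain ⟨φ, hφ⟩ := (convexOn_univ_of_midpoint_le hFc hFmid).exists_clm_add_le hFc x
  refine ⟨(InnerProductSpace.toDual ℝ E).symm φ - C • x, fun z => ?_⟩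
  have hz : ‖z‖ ^ 2 = ‖x‖ ^ 2 + 2 * ⟪x, z - x⟫ + ‖z - x‖ ^ 2 := by
    rw [← norm_add_sq_real, add_sub_cancel]
  have := hφ z
  rw [inner_sub_left, real_inner_smul_left, InnerProductSpace.toDual_symm_apply]
  simp only [F, hz] at this
  linarith

theorem SemiconcaveWith.exists_quadratic_majorant [CompleteSpace E] {C : ℝ} {f : E → ℝ}
    (hf : SemiconcaveWith C f) (hc : Continuous f) (x : E) :
    ∃ p : E, ∀ z, f z ≤ f x + ⟪p, z - x⟫ + C / 2 * ‖z - x‖ ^ 2 := by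
  obtain ⟨p, hp⟩ := hf.neg.exists_quadratic_minorant hc.neg x
  refine ⟨-p, fun z => ?_⟩
  have := hp z
  simp only [Pi.neg_apply] at this
  rw [inner_neg_left]
  linarith

lemma norm_le_of_forall_norm_eq_inner_le {v : E} {r K : ℝ} (hr : 0 < r) (hK : 0 ≤ K)
    (h : ∀ w, ‖w‖ = r → ⟪v, w⟫ ≤ r * K) : ‖v‖ ≤ K := by
  rcases eq_or_ne v 0 with rfl | hv
  · simpa using hK
  have hv' : 0 < ‖v‖ := norm_pos_iff.2 hv
  have := h ((r / ‖v‖) • v) (by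
    rw [norm_smul, Real.norm_of_nonneg (by positivity), div_mul_cancel₀ _ hv'.ne'])
  rw [real_inner_smul_right, real_inner_self_eq_norm_sq,
    show r / ‖v‖ * ‖v‖ ^ 2 = r * ‖v‖ by field_simp] at this
  exact le_of_mul_le_mul_left this hr

lemma eq_zero_of_forall_inner_le_mul_norm_sq {v : E} {C : ℝ} (hC : 0 ≤ C)
    (h : ∀ w, ⟪v, w⟫ ≤ C * ‖w‖ ^ 2) : v = 0 := by
  have hbound : ∀ r > 0, ‖v‖ ≤ C * r := fun r hr =>
    norm_le_of_forall_norm_eq_inner_le hr (by positivity) fun w hw =>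
      (h w).trans_eq (by rw [hw]; ring)
  by_contra hv
  have hv' : 0 < ‖v‖ := norm_pos_iff.2 hv
  have hlt : C * (‖v‖ / (C + 1)) < ‖v‖ := by
    rw [← mul_div_assoc, div_lt_iff₀ (by positivity)]
    nlinarith
  linarith [hbound (‖v‖ / (C + 1)) (by positivity)]

lemma hasGradientAt_of_quadratic_bounds [CompleteSpace E] {f : E → ℝ} {x p : E} {C : ℝ}
    (hupper : ∀ h, f (x + h) ≤ f x + ⟪p, h⟫ + C * ‖h‖ ^ 2)
    (hlower : ∀ h, f x + ⟪p, h⟫ - C * ‖h‖ ^ 2 ≤ f (x + h)) :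
    HasGradientAt f p x := by
  rw [hasGradientAt_iff_hasFDerivAt, hasFDerivAt_iff_isLittleO_nhds_zero]
  refine (Asymptotics.IsBigO.of_bound C (Eventually.of_forall fun h => ?_)).trans_isLittleO
    (Asymptotics.isLittleO_norm_pow_id one_lt_two)
  rw [InnerProductSpace.toDual_apply_apply, Real.norm_eq_abs, norm_pow, norm_norm, abs_le]
  constructor <;> linarith [hupper h, hlower h]

theorem exists_common_quadratic_bounds [CompleteSpace E] {um up : E → ℝ} {C : ℝ} (hC : 0 ≤ C)
    (hum : SemiconcaveWith C um) (hup : SemiconvexWith C up)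
    (humc : Continuous um) (hupc : Continuous up) (hle : ∀ z, up z ≤ um z)
    {x : E} (hx : um x = up x) :
    ∃ p : E, (∀ z, um z ≤ um x + ⟪p, z - x⟫ + C / 2 * ‖z - x‖ ^ 2) ∧
      ∀ z, up x + ⟪p, z - x⟫ - C / 2 * ‖z - x‖ ^ 2 ≤ up z := by
  obtain ⟨p, hp⟩ := hum.exists_quadratic_majorant humc x
  obtain ⟨q, hq⟩ := hup.exists_quadratic_minorant hupc x
  have hqp : q - p = 0 := eq_zero_of_forall_inner_le_mul_norm_sq hC fun h => by
    have hpx := hp (x + h)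
    have hqx := hq (x + h)
    rw [add_sub_cancel_left] at hpx hqx
    rw [inner_sub_left]
    linarith [hle (x + h)]
  exact ⟨p, hp, sub_eq_zero.1 hqp ▸ hq⟩

theorem hasGradientAt_of_quadratic_touching [CompleteSpace E] {um up : E → ℝ} {C : ℝ}
    (hle : ∀ z, up z ≤ um z) {x p : E} (hx : um x = up x)
    (hupper : ∀ z, um z ≤ um x + ⟪p, z - x⟫ + C / 2 * ‖z - x‖ ^ 2)
    (hlower : ∀ z, up x + ⟪p, z - x⟫ - C / 2 * ‖z - x‖ ^ 2 ≤ up z) :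
    HasGradientAt um p x ∧ HasGradientAt up p x := by
  have hu : ∀ h, um (x + h) ≤ um x + ⟪p, h⟫ + C / 2 * ‖h‖ ^ 2 := fun h => by
    simpa using hupper (x + h)
  have hl : ∀ h, up x + ⟪p, h⟫ - C / 2 * ‖h‖ ^ 2 ≤ up (x + h) := fun h => by
    simpa using hlower (x + h)
  exact ⟨hasGradientAt_of_quadratic_bounds hu fun h => by linarith [hl h, hle (x + h)],
    hasGradientAt_of_quadratic_bounds (fun h => by linarith [hu h, hle (x + h)]) hl⟩

theorem norm_sub_le_of_quadratic_bounds {um up : E → ℝ} {C : ℝ} (hC : 0 ≤ C)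
    (hle : ∀ z, up z ≤ um z) {x y p q : E} (hxy : x ≠ y) (hy : um y = up y)
    (hp : ∀ z, um z ≤ um x + ⟪p, z - x⟫ + C / 2 * ‖z - x‖ ^ 2)
    (hq_upper : ∀ z, um z ≤ um y + ⟪q, z - y⟫ + C / 2 * ‖z - y‖ ^ 2)
    (hq_lower : ∀ z, up y + ⟪q, z - y⟫ - C / 2 * ‖z - y‖ ^ 2 ≤ up z) :
    ‖q - p‖ ≤ 3 * C * ‖y - x‖ := by
  have hr : 0 < ‖y - x‖ := norm_pos_iff.2 (sub_ne_zero.2 hxy.symm)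
  refine norm_le_of_forall_norm_eq_inner_le hr (by positivity) fun w hw => ?_
  have hsum : ⟪q - p, w⟫ ≤ C / 2 * (‖w - (y - x)‖ ^ 2 + ‖y - x‖ ^ 2 + ‖w‖ ^ 2) := by
    have h₁ := hq_lower (x + w)
    have h₂ := hle (x + w)
    have h₃ := hp (x + w)
    have h₄ := hq_upper x
    rw [show x + w - y = w - (y - x) by abel, inner_sub_right] at h₁
    rw [show x - y = -(y - x) by abel, norm_neg, inner_neg_right] at h₄
    rw [add_sub_cancel_left] at h₃
    rw [inner_sub_left]
    linarith
  have htri : ‖w - (y - x)‖ ≤ 2 * ‖y - x‖ := (norm_sub_le _ _).trans (by rw [hw]; linarith)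
  rw [hw] at hsum
  calc ⟪q - p, w⟫ ≤ C / 2 * ((2 * ‖y - x‖) ^ 2 + ‖y - x‖ ^ 2 + ‖y - x‖ ^ 2) := by
        refine hsum.trans ?_
        gcongr
    _ = ‖y - x‖ * (3 * C * ‖y - x‖) := by ring

end InnerProduct

/-- C^{1,1} regularity on the agreement set: if `u₋` is semiconcave
with linear modulus, `u₊` is semiconvex with linear modulus, and `u₊ ≤ u₋`, then on
`I = {x : u₋(x) = u₊(x)}` both `u₋` and `u₊` are differentiable with a common
gradient that is Lipschitz on `I`, i.e. they are of class `C^{1,1}` on `I`. -/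
theorem stmt_15
    {E : Type*} [NormedAddCommGroup E] [InnerProductSpace ℝ E] [CompleteSpace E]
    (um up : E → ℝ) (humc : Continuous um) (hupc : Continuous up)
    (C : ℝ) (hC : 0 ≤ C)
    -- `u₋` semiconcave with linear modulus
    (hsc : ∀ x h : E, um (x + h) + um (x - h) - 2 * um x ≤ C * ‖h‖ ^ 2)
    -- `u₊` semiconvex with linear modulus
    (hsv : ∀ x h : E, -(C * ‖h‖ ^ 2) ≤ up (x + h) + up (x - h) - 2 * up x)
    -- `u₊ ≤ u₋`
    (hle : ∀ x : E, up x ≤ um x) :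
    ∃ (g : E → E) (K : ℝ≥0),
      (∀ x ∈ {y : E | um y = up y},
        HasGradientAt um (g x) x ∧ HasGradientAt up (g x) x) ∧
      LipschitzOnWith K g {y : E | um y = up y} := by
  choose! g hg_upper hg_lower using fun x (hx : um x = up x) =>
    exists_common_quadratic_bounds hC hsc hsv humc hupc hle hx
  refine ⟨g, ⟨3 * C, by positivity⟩, fun x hx =>
    hasGradientAt_of_quadratic_touching hle hx (hg_upper x hx) (hg_lower x hx), ?_⟩
  refine LipschitzOnWith.of_dist_le_mul fun x hx y hy => ?_
  rcases eq_or_ne x y with rfl | hxy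
  · simp
  rw [dist_eq_norm, dist_eq_norm, norm_sub_rev, norm_sub_rev x]
  exact norm_sub_le_of_quadratic_bounds hC hle hxy hy (hg_upper x hx) (hg_upper y hy)
    (hg_lower y hy)
end

section
/- Monotonicity of the barrier function: given x₀ ∈ M and a (v₊,L,0)-calibrated curve γ: [0,∞) → M with γ(0)=x₀, the barrier function B_{v₊}(γ(t)) := u₋(γ(t)) - v₊(γ(t)) is nonnegative and non-increasing on [0,∞); and if x₀ ∉ A (the projected Aubry set), then t ↦ B_{v₊}(γ(t)) is strictly decreasing. -/
open Set

/-- monotonicity of the barrier function: along a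
`(v₊,L,0)`-calibrated curve `γ : [0,∞) → M` with `γ(0) = x₀`, the barrier
`B_{v₊}(γ(t)) = u₋(γ(t)) - v₊(γ(t))` is nonnegative and non-increasing; it is
strictly decreasing when `x₀ ∉ A` (the projected Aubry set). -/
theorem stmt_17
    {E : Type*} [NormedAddCommGroup E] [InnerProductSpace ℝ E]
    (L : E → ℝ → E → ℝ) (lam : ℝ) (hlam : 0 < lam)
    (hLc : Continuous fun q : E × ℝ × E => L q.1 q.2.1 q.2.2)
    -- (L3): -λ ≤ ∂L/∂u < 0
    (hL3 : ∀ x v, ∀ r₁ r₂ : ℝ, r₁ < r₂ →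
      L x r₂ v < L x r₁ v ∧ L x r₁ v - L x r₂ v ≤ lam * (r₂ - r₁))
    (um vp : E → ℝ) (humc : Continuous um) (hvpc : Continuous vp)
    -- `u₋ ≺ L`
    (hdom : ∀ (γ : ℝ → E) (t₁ t₂ : ℝ), t₁ < t₂ →
      ContDiffOn ℝ 1 γ (Icc t₁ t₂) →
      um (γ t₂) - um (γ t₁) ≤ ∫ s in t₁..t₂, L (γ s) (um (γ s)) (deriv γ s))
    -- `v₊ ≤ u₋` everywhere
    (hle : ∀ x : E, vp x ≤ um x)
    -- the projected Aubry set: off it, `v₊ < u₋` strictly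
    (A : Set E)
    (hstrict : ∀ x : E, x ∉ A → vp x < um x)
    (x₀ : E) (γ : ℝ → E) (hγ0 : γ 0 = x₀) (hγ : ContDiff ℝ 1 γ)
    -- `γ` is `(v₊,L,0)`-calibrated on `[0,∞)`
    (hcal : ∀ t t' : ℝ, 0 ≤ t → t ≤ t' →
      vp (γ t') - vp (γ t) = ∫ s in t..t', L (γ s) (vp (γ s)) (deriv γ s))
    -- invariance of the Aubry set: a calibrated curve starting off `A` stays off `A`
    (hinv : x₀ ∉ A → ∀ t : ℝ, 0 ≤ t → γ t ∉ A) :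
    (∀ t : ℝ, 0 ≤ t → 0 ≤ um (γ t) - vp (γ t)) ∧
    (∀ t t' : ℝ, 0 ≤ t → t ≤ t' →
      um (γ t') - vp (γ t') ≤ um (γ t) - vp (γ t)) ∧
    (x₀ ∉ A → ∀ t t' : ℝ, 0 ≤ t → t < t' →
      um (γ t') - vp (γ t') < um (γ t) - vp (γ t)) := by
  have hderiv : Continuous (deriv γ) := hγ.continuous_deriv le_rfl
  set f : ℝ → ℝ := fun s => L (γ s) (um (γ s)) (deriv γ s) with hf
  set g : ℝ → ℝ := fun s => L (γ s) (vp (γ s)) (deriv γ s) with hg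
  have hfc : Continuous f :=
    hLc.comp (hγ.continuous.prodMk ((humc.comp hγ.continuous).prodMk hderiv))
  have hgc : Continuous g :=
    hLc.comp (hγ.continuous.prodMk ((hvpc.comp hγ.continuous).prodMk hderiv))
  have hfg : ∀ s : ℝ, f s ≤ g s := by
    intro s
    rcases eq_or_lt_of_le (hle (γ s)) with h | h
    · simp [hf, hg, h]
    · exact (hL3 (γ s) (deriv γ s) (vp (γ s)) (um (γ s)) h).1.le
  have key : ∀ t t' : ℝ, 0 ≤ t → t ≤ t' →
      um (γ t') - vp (γ t') ≤ um (γ t) - vp (γ t) := by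
    intro t t' ht htt'
    rcases eq_or_lt_of_le htt' with rfl | hlt
    · exact le_refl _
    have h1 : um (γ t') - um (γ t) ≤ ∫ s in t..t', f s :=
      hdom γ t t' hlt hγ.contDiffOn
    have h2 : (∫ s in t..t', f s) ≤ ∫ s in t..t', g s :=
      intervalIntegral.integral_mono_on hlt.le
        (hfc.intervalIntegrable t t') (hgc.intervalIntegrable t t')
        (fun s _ => hfg s)
    have h3 : vp (γ t') - vp (γ t) = ∫ s in t..t', g s := hcal t t' ht hlt.le
    linarith
  refine ⟨fun t _ => sub_nonneg.2 (hle _), key, ?_⟩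
  intro hA t t' ht hlt
  have hlt' : ∀ s, t ≤ s → f s < g s := by
    intro s hs
    exact (hL3 (γ s) (deriv γ s) (vp (γ s)) (um (γ s))
      (hstrict _ (hinv hA s (ht.trans hs)))).1
  have h1 : um (γ t') - um (γ t) ≤ ∫ s in t..t', f s :=
    hdom γ t t' hlt hγ.contDiffOn
  have h2 : (∫ s in t..t', f s) < ∫ s in t..t', g s :=
    intervalIntegral.integral_lt_integral_of_continuousOn_of_le_of_exists_lt hlt
      hfc.continuousOn hgc.continuousOn (fun s hs => (hlt' s hs.1.le).le)
      ⟨t, ⟨le_refl t, hlt.le⟩, hlt' t le_rfl⟩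
  have h3 : vp (γ t') - vp (γ t) = ∫ s in t..t', g s := hcal t t' ht hlt.le
  linarith
end
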